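/- arXiv:2101.06002 — 2 statements merged into one kernel-verified Lean document; each statement's English description precedes it below -/
import Mathlib

section
/- Fix 1 < p < ∞ and let f : ℝ → ℝ satisfy f(t) = t² for |t| ≤ 2. Then the map X ↦ f(1 + X) - f(1), defined on {X ∈ L^∞[0,1] : ‖X‖_∞ ≤ 1} ⊂ L^p[0,1] (where f is applied pointwise), is not Fréchet differentiable at 0 in the L^p norm; more precisely, there is no bounded linear map T : L^p[0,1] → L^p[0,1] with ‖f(1+X) - f(1) - T(X)‖_p = o(‖X‖_p) as ‖X‖_p → 0 over X with ‖X‖_∞ ≤ 1. -/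
/-! Evaluating the remainder at `X` and at `-X` and adding, any additive `T` cancels and what is
left is the even part `f (1 + X) + f (1 - X) - 2 f 1 = 2 X²`. For the indicator `X` of a short
interval `[0, ε]` one has `X² = X`, so the two remainders together have norm `2 ‖X‖_p`, although
each is at most `‖X‖_p / 2`; and `‖X‖_p = ε ^ (1 / p)` can be made as small as we like. -/

open MeasureTheory Set
open scoped ENNReal

lemma apply_one_add_sub_apply_one {f : ℝ → ℝ} (hf : ∀ t : ℝ, |t| ≤ 2 → f t = t ^ 2)
    {x : ℝ} (hx : |x| ≤ 1) : f (1 + x) - f 1 = 2 * x + x ^ 2 := by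
  have h : |1 + x| ≤ 2 := (abs_add_le 1 x).trans (by rw [abs_one]; linarith)
  rw [hf _ h, hf 1 (by norm_num)]
  ring

section

variable {α 𝓕 : Type*} [MeasurableSpace α] {μ : Measure α} {p : ℝ≥0∞} [Fact (1 ≤ p)]

lemma eLpNorm_add_le_of_map_neg {E F : Type*} [NormedAddCommGroup E] [NormedAddCommGroup F]
    [FunLike 𝓕 (Lp E p μ) (Lp F p μ)] [AddMonoidHomClass 𝓕 (Lp E p μ) (Lp F p μ)] (T : 𝓕)
    {X : α → E} (hX : MemLp X p μ) {u v : α → F}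
    (hu : AEStronglyMeasurable u μ) (hv : AEStronglyMeasurable v μ) :
    eLpNorm (u + v) p μ ≤ eLpNorm (fun t => u t - T (hX.toLp X) t) p μ
      + eLpNorm (fun t => v t - T (hX.neg.toLp (-X)) t) p μ := by
  have hT_neg : (T (hX.neg.toLp (-X)) : α → F) =ᵐ[μ] -T (hX.toLp X) := by
    rw [hX.toLp_neg, map_neg]
    exact Lp.coeFn_neg _
  have h_split : u + v =ᵐ[μ]
      (fun t => u t - T (hX.toLp X) t) + (fun t => v t - T (hX.neg.toLp (-X)) t) := by
    filter_upwards [hT_neg] with t ht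
    simp only [Pi.add_apply, ht, Pi.neg_apply]
    abel
  rw [eLpNorm_congr_ae h_split]
  exact eLpNorm_add_le (hu.sub (Lp.aestronglyMeasurable _)) (hv.sub (Lp.aestronglyMeasurable _))
    Fact.out

lemma two_mul_eLpNorm_le_of_eq_zero_or_eq_one {f : ℝ → ℝ} (hf : ∀ t : ℝ, |t| ≤ 2 → f t = t ^ 2)
    [FunLike 𝓕 (Lp ℝ p μ) (Lp ℝ p μ)] [AddMonoidHomClass 𝓕 (Lp ℝ p μ) (Lp ℝ p μ)]
    (T : 𝓕) {X : α → ℝ} (hX : MemLp X p μ) (hX01 : ∀ t, X t = 0 ∨ X t = 1) :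
    2 * eLpNorm X p μ ≤ eLpNorm (fun t => f (1 + X t) - f 1 - T (hX.toLp X) t) p μ
      + eLpNorm (fun t => f (1 + (-X) t) - f 1 - T (hX.neg.toLp (-X)) t) p μ := by
  have hX_abs (t : α) : |X t| ≤ 1 := by rcases hX01 t with h | h <;> simp [h]
  have hu : (fun t => f (1 + X t) - f 1) = fun t => 2 * X t + X t ^ 2 :=
    funext fun t => apply_one_add_sub_apply_one hf (hX_abs t)
  have hv : (fun t => f (1 + (-X) t) - f 1) = fun t => 2 * (-X) t + (-X) t ^ 2 :=
    funext fun t => apply_one_add_sub_apply_one hf ((abs_neg _).trans_le (hX_abs t))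
  have h_even : (fun t => f (1 + X t) - f 1) + (fun t => f (1 + (-X) t) - f 1) = (2 : ℝ) • X := by
    rw [hu, hv]
    funext t
    rcases hX01 t with h | h <;> norm_num [h]
  have hX_meas := hX.aestronglyMeasurable
  calc 2 * eLpNorm X p μ = eLpNorm ((2 : ℝ) • X) p μ := by
        rw [eLpNorm_const_smul, Real.enorm_of_nonneg zero_le_two, ENNReal.ofReal_ofNat]
    _ ≤ _ := h_even ▸ eLpNorm_add_le_of_map_neg T hX (by rw [hu]; fun_prop) (by rw [hv]; fun_prop)

end

lemma exists_eLpNorm_indicator_Icc_mem_Ioo {p : ℝ≥0∞} (hp0 : p ≠ 0) (hp : p ≠ ⊤)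
    {δ : ℝ≥0∞} (hδ : 0 < δ) :
    ∃ ε : ℝ, eLpNorm ((Icc 0 ε).indicator fun _ => (1 : ℝ)) p
      (volume.restrict (Icc 0 1)) ∈ Ioo 0 δ := by
  have hp_pos : 0 < p.toReal := ENNReal.toReal_pos hp0 hp
  obtain ⟨r, -, hr_pos, hr_lt⟩ := ENNReal.lt_iff_exists_real_btwn.mp
    (ENNReal.rpow_pos_of_nonneg hδ hp_pos.le)
  have hr : 0 < r := ENNReal.ofReal_pos.mp hr_pos
  set ε := min r 1
  have hε : ε ≤ 1 := min_le_right r 1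
  have h_meas : volume.restrict (Icc (0 : ℝ) 1) (Icc 0 ε) = ENNReal.ofReal ε := by
    rw [Measure.restrict_apply measurableSet_Icc,
      inter_eq_self_of_subset_left (Icc_subset_Icc le_rfl hε), Real.volume_Icc, sub_zero]
  refine ⟨ε, ?_⟩
  rw [eLpNorm_indicator_const measurableSet_Icc hp0 hp, h_meas, enorm_one, one_mul, one_div]
  refine ⟨ENNReal.rpow_pos (ENNReal.ofReal_pos.mpr (lt_min hr one_pos)) ENNReal.ofReal_ne_top,
    (ENNReal.rpow_inv_lt_iff hp_pos).mpr ?_⟩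
  exact (ENNReal.ofReal_le_ofReal (min_le_left r 1)).trans_lt hr_lt

theorem no_frechet_derivative_on_Lp_general
    (p : ℝ) [Fact (1 ≤ ENNReal.ofReal p)]
    (f : ℝ → ℝ) (hf : ∀ t : ℝ, |t| ≤ 2 → f t = t ^ 2) :
    ¬ ∃ T : Lp ℝ (ENNReal.ofReal p) (volume.restrict (Set.Icc (0:ℝ) 1)) →L[ℝ]
          Lp ℝ (ENNReal.ofReal p) (volume.restrict (Set.Icc (0:ℝ) 1)),
        ∀ c : ℝ, 0 < c → ∃ δ : ℝ, 0 < δ ∧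
          ∀ X : ℝ → ℝ, (∀ t, |X t| ≤ 1) →
            ∀ hX : MemLp X (ENNReal.ofReal p) (volume.restrict (Set.Icc (0:ℝ) 1)),
            eLpNorm X (ENNReal.ofReal p) (volume.restrict (Set.Icc (0:ℝ) 1))
              < ENNReal.ofReal δ →
            eLpNorm
                (fun t => f (1 + X t) - f 1 -
                  (T (hX.toLp X) : ℝ → ℝ) t)
                (ENNReal.ofReal p) (volume.restrict (Set.Icc (0:ℝ) 1))
              ≤ ENNReal.ofReal c *
                eLpNorm X (ENNReal.ofReal p) (volume.restrict (Set.Icc (0:ℝ) 1)) := by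
  set μ := volume.restrict (Icc (0 : ℝ) 1)
  rintro ⟨T, hT⟩
  obtain ⟨δ, hδ, hT_small⟩ := hT (1 / 2) one_half_pos
  obtain ⟨ε, hN_pos, hN_lt⟩ := exists_eLpNorm_indicator_Icc_mem_Ioo
    (zero_lt_one.trans_le (Fact.out : 1 ≤ ENNReal.ofReal p)).ne' ENNReal.ofReal_ne_top
    (ENNReal.ofReal_pos.mpr hδ)
  set X : ℝ → ℝ := (Icc 0 ε).indicator fun _ => 1
  set N := eLpNorm X (ENNReal.ofReal p) μ
  have hX : MemLp X (ENNReal.ofReal p) μ :=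
    memLp_indicator_const _ measurableSet_Icc 1 (Or.inr (measure_ne_top μ _))
  have hX01 (t : ℝ) : X t = 0 ∨ X t = 1 := by
    simp only [X, indicator_apply]; split_ifs <;> simp
  have hX_abs (t : ℝ) : |X t| ≤ 1 := by rcases hX01 t with h | h <;> simp [h]
  have h_le : N + N ≤ N := calc
    N + N = 2 * N := (two_mul N).symm
    _ ≤ _ := two_mul_eLpNorm_le_of_eq_zero_or_eq_one hf T hX hX01
    _ ≤ ENNReal.ofReal (1 / 2) * N + ENNReal.ofReal (1 / 2) * N := by
      refine add_le_add (hT_small X hX_abs hX hN_lt) ?_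
      simpa only [eLpNorm_neg] using hT_small (-X) (fun t => (abs_neg _).trans_le (hX_abs t)) hX.neg
        (by rwa [eLpNorm_neg])
    _ = N := by rw [← add_mul, ← ENNReal.ofReal_add (by norm_num) (by norm_num)]; norm_num
  exact (ENNReal.lt_add_right hX.eLpNorm_ne_top hN_pos.ne').not_ge h_le

/-- for f with f(t) = t² on |t| ≤ 2, the map X ↦ f(1+X) - f(1) is
not Fréchet differentiable at 0 on L^p[0,1] along {‖X‖_∞ ≤ 1}: no bounded linear
map T : L^p → L^p satisfies ‖f(1+X) - f(1) - T X‖_p = o(‖X‖_p). -/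
theorem no_frechet_derivative_on_Lp
    (p : ℝ) (hp : 1 < p) [Fact (1 ≤ ENNReal.ofReal p)]
    (f : ℝ → ℝ) (hf : ∀ t : ℝ, |t| ≤ 2 → f t = t ^ 2) :
    ¬ ∃ T : Lp ℝ (ENNReal.ofReal p) (volume.restrict (Set.Icc (0:ℝ) 1)) →L[ℝ]
          Lp ℝ (ENNReal.ofReal p) (volume.restrict (Set.Icc (0:ℝ) 1)),
        ∀ c : ℝ, 0 < c → ∃ δ : ℝ, 0 < δ ∧
          ∀ X : ℝ → ℝ, (∀ t, |X t| ≤ 1) →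
            ∀ hX : MemLp X (ENNReal.ofReal p) (volume.restrict (Set.Icc (0:ℝ) 1)),
            eLpNorm X (ENNReal.ofReal p) (volume.restrict (Set.Icc (0:ℝ) 1))
              < ENNReal.ofReal δ →
            eLpNorm
                (fun t => f (1 + X t) - f 1 -
                  (T (hX.toLp X) : ℝ → ℝ) t)
                (ENNReal.ofReal p) (volume.restrict (Set.Icc (0:ℝ) 1))
              ≤ ENNReal.ofReal c *
                eLpNorm X (ENNReal.ofReal p) (volume.restrict (Set.Icc (0:ℝ) 1)) :=
  no_frechet_derivative_on_Lp_general p f hf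
end

section
/- Let f : ℝ → ℂ be Lipschitz and suppose that for some 1 < p < ∞ the map X ↦ f(A + X) - f(A) is Fréchet differentiable (as a map S^p_sa → S^p) at 0 for the diagonal self-adjoint operator A with eigenvalues forming a dense sequence (λ_k) in ℝ, with derivative D. If D[Q_k] = f'(λ_k) Q_k for all k (where Q_k are the rank-one spectral projections of A), then for every ε > 0 there is η > 0 such that |f(λ_k + t) - f(λ_k) - t f'(λ_k)| ≤ ε|t| for all k and 0 < |t| < η, and consequently f' is uniformly continuous. -/
/-- Abstract formulation of the necessity argument in S^p: V plays the
role of the Schatten class S^p, Φ the map X ↦ f(A+X) - f(A) for the diagonal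
self-adjoint operator A with dense eigenvalue sequence (λ_k), Q k the rank-one
spectral projections (of norm one), and D the Fréchet derivative of Φ at 0.
Given the functional calculus identities Φ(t Q_k) = (f(λ_k+t) - f(λ_k)) Q_k and
D[Q_k] = f'(λ_k) Q_k, together with Fréchet differentiability at 0
(‖Φ X - D X‖ = o(‖X‖)), one gets the uniform Taylor estimate at the points λ_k
and, consequently, uniform continuity of f'. -/
theorem uniformContinuous_deriv_of_frechet_differentiable
    (f : ℝ → ℂ) (hLip : ∃ L : NNReal, LipschitzWith L f)
    (hdiff : Differentiable ℝ f) (hcont : Continuous (deriv f))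
    {V : Type*} [NormedAddCommGroup V] [NormedSpace ℂ V]
    (lam : ℕ → ℝ) (hdense : Dense (Set.range lam))
    (Q : ℕ → V) (hQ : ∀ k, ‖Q k‖ = 1)
    (Φ : V → V) (D : V →L[ℂ] V)
    (hΦ : ∀ (k : ℕ) (t : ℝ), Φ ((t : ℂ) • Q k) = (f (lam k + t) - f (lam k)) • Q k)
    (hD : ∀ k : ℕ, D (Q k) = deriv f (lam k) • Q k)
    (hFD : ∀ c : ℝ, 0 < c → ∃ δ : ℝ, 0 < δ ∧ ∀ X : V, ‖X‖ < δ →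
      ‖Φ X - D X‖ ≤ c * ‖X‖) :
    (∀ ε : ℝ, 0 < ε → ∃ η : ℝ, 0 < η ∧ ∀ (k : ℕ) (t : ℝ), 0 < |t| → |t| < η →
      ‖f (lam k + t) - f (lam k) - (t : ℂ) * deriv f (lam k)‖ ≤ ε * |t|) ∧
    UniformContinuous (deriv f) := by
  have key : ∀ ε : ℝ, 0 < ε → ∃ η : ℝ, 0 < η ∧ ∀ (k : ℕ) (t : ℝ), 0 < |t| → |t| < η →
      ‖f (lam k + t) - f (lam k) - (t : ℂ) * deriv f (lam k)‖ ≤ ε * |t| := by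
    intro ε hε
    obtain ⟨δ, hδ, hX⟩ := hFD ε hε
    refine ⟨δ, hδ, fun k t ht htη => ?_⟩
    have hnorm : ‖(t : ℂ) • Q k‖ = |t| := by
      rw [norm_smul, hQ k, mul_one, Complex.norm_real, Real.norm_eq_abs]
    have h := hX ((t : ℂ) • Q k) (by rw [hnorm]; exact htη)
    rw [hnorm] at h
    rw [hΦ, map_smul, hD, smul_smul, ← sub_smul, norm_smul, hQ k, mul_one] at h
    simpa using h
  refine ⟨key, ?_⟩
  -- extend the Taylor estimate to all points, by density and continuity
  have key' : ∀ ε : ℝ, 0 < ε → ∃ η : ℝ, 0 < η ∧ ∀ (x t : ℝ), 0 < |t| → |t| < η →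
      ‖f (x + t) - f x - (t : ℂ) * deriv f x‖ ≤ ε * |t| := by
    intro ε hε
    obtain ⟨η, hη, hest⟩ := key ε hε
    refine ⟨η, hη, fun x t ht htη => ?_⟩
    have hclosed : IsClosed {x : ℝ | ‖f (x + t) - f x - (t : ℂ) * deriv f x‖ ≤ ε * |t|} := by
      apply isClosed_le _ continuous_const
      exact (((hdiff.continuous.comp (continuous_id.add continuous_const)).sub
        hdiff.continuous).sub (continuous_const.mul hcont)).norm
    have hsub : Set.range lam ⊆ {x : ℝ | ‖f (x + t) - f x - (t : ℂ) * deriv f x‖ ≤ ε * |t|} := by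
      rintro _ ⟨k, rfl⟩
      exact hest k t ht htη
    have hd2 := (hdense.mono hsub).closure_eq
    rw [hclosed.closure_eq] at hd2
    have : x ∈ {x : ℝ | ‖f (x + t) - f x - (t : ℂ) * deriv f x‖ ≤ ε * |t|} := by
      rw [hd2]; trivial
    exact this
  rw [Metric.uniformContinuous_iff]
  intro ε hε
  obtain ⟨η, hη, hest⟩ := key' (ε / 4) (by linarith)
  refine ⟨η, hη, fun {x y} hxy => ?_⟩
  rcases eq_or_ne y x with rfl | hne
  · simpa using hε
  set t := x - y with htdef
  have ht : 0 < |t| := abs_pos.mpr (sub_ne_zero.mpr (Ne.symm hne))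
  have htη : |t| < η := by rwa [Real.dist_eq] at hxy
  have h1 := hest y t ht htη
  have h2 := hest x (-t) (by simpa using ht) (by simpa using htη)
  have hy : y + t = x := by ring
  have hx' : x + -t = y := by ring
  rw [hy] at h1
  rw [hx'] at h2
  have hsum : ‖(t : ℂ) * deriv f x - (t : ℂ) * deriv f y‖ ≤ ε / 2 * |t| := by
    have h3 := norm_add_le (f x - f y - (t : ℂ) * deriv f y)
      (f y - f x - ((-t : ℝ) : ℂ) * deriv f x)
    have heq : (f x - f y - (t : ℂ) * deriv f y) + (f y - f x - ((-t : ℝ) : ℂ) * deriv f x)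
        = (t : ℂ) * deriv f x - (t : ℂ) * deriv f y := by
      push_cast; ring
    rw [heq] at h3
    calc ‖(t : ℂ) * deriv f x - (t : ℂ) * deriv f y‖ ≤ ε / 4 * |t| + ε / 4 * |t| :=
          h3.trans (add_le_add h1 (by simpa using h2))
      _ = ε / 2 * |t| := by ring
  rw [← mul_sub, norm_mul, Complex.norm_real, Real.norm_eq_abs] at hsum
  have hd : ‖deriv f x - deriv f y‖ ≤ ε / 2 :=
    (mul_le_mul_iff_right₀ ht).mp (by rw [mul_comm (ε/2) |t|] at hsum; exact hsum)
  rw [dist_eq_norm]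
  calc ‖deriv f x - deriv f y‖ ≤ ε / 2 := hd
    _ < ε := by linarith
end
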